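/- arXiv:2005.00998 — 3 statements merged into one kernel-verified Lean document; each statement's English description precedes it below -/
import Mathlib

section
/- For any t₁, t₂ ∈ ℝ and δ > 0, |δ²·t₁·(1/(δ² + t₁²) − 1/(δ² + t₂²))| ≤ |t₁ − t₂|. -/
/-- Lipschitz-like inequality for the Cauchy-loss weight function: for any
`t₁, t₂ ∈ ℝ` and `δ > 0`, `|δ²·t₁·(1/(δ² + t₁²) − 1/(δ² + t₂²))| ≤ |t₁ − t₂|`. -/
theorem cauchy_weight_lipschitz_like (δ t₁ t₂ : ℝ) (hδ : 0 < δ) :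
    |δ ^ 2 * t₁ * (1 / (δ ^ 2 + t₁ ^ 2) - 1 / (δ ^ 2 + t₂ ^ 2))| ≤ |t₁ - t₂| := by
  have hA : 0 < δ ^ 2 + t₁ ^ 2 := by positivity
  have hB : 0 < δ ^ 2 + t₂ ^ 2 := by positivity
  have key : δ ^ 2 * t₁ * (1 / (δ ^ 2 + t₁ ^ 2) - 1 / (δ ^ 2 + t₂ ^ 2)) =
      (t₁ - t₂) * (-(δ ^ 2 * (t₁ * (t₁ + t₂))) / ((δ ^ 2 + t₁ ^ 2) * (δ ^ 2 + t₂ ^ 2))) := by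
    field_simp
    ring
  rw [key, abs_mul]
  have h1 : |(-(δ ^ 2 * (t₁ * (t₁ + t₂))) / ((δ ^ 2 + t₁ ^ 2) * (δ ^ 2 + t₂ ^ 2)))| ≤ 1 := by
    rw [abs_div, div_le_one (by positivity)]
    rw [abs_of_pos (by positivity : (0:ℝ) < (δ ^ 2 + t₁ ^ 2) * (δ ^ 2 + t₂ ^ 2))]
    rw [abs_le]
    constructor <;> nlinarith [sq_nonneg (δ^2 - t₁*t₂), sq_nonneg (δ^2 + t₁*t₂),
      sq_nonneg (t₁ - t₂), sq_nonneg (t₁ + t₂), sq_nonneg δ, sq_nonneg t₂]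
  calc |t₁ - t₂| * |(-(δ ^ 2 * (t₁ * (t₁ + t₂))) / ((δ ^ 2 + t₁ ^ 2) * (δ ^ 2 + t₂ ^ 2)))|
      ≤ |t₁ - t₂| * 1 := by exact mul_le_mul_of_nonneg_left h1 (abs_nonneg _)
    _ = |t₁ - t₂| := mul_one _
end

section
/- Let u be a unit vector in ℝ^n, v ∈ ℝ^n, α > 0, and suppose ṽ = v + α·u is nonzero and u' = ṽ/‖ṽ‖. Then ⟨v, u' − u⟩ ≥ (α/2)·‖u' − u‖². -/
open scoped RealInnerProductSpace

/-- Sufficient-decrease estimate for the unit-sphere update in HQ-ADMM: if `u` is a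
unit vector, `α > 0`, `ṽ = v + α·u ≠ 0`, and `u' = ṽ/‖ṽ‖`, then
`⟨v, u' − u⟩ ≥ (α/2)·‖u' − u‖²`. -/
theorem sphere_update_sufficient_decrease {n : ℕ}
    (u v : EuclideanSpace ℝ (Fin n)) (hu : ‖u‖ = 1) (α : ℝ) (hα : 0 < α)
    (hne : v + α • u ≠ 0)
    (u' : EuclideanSpace ℝ (Fin n)) (hu' : u' = ‖v + α • u‖⁻¹ • (v + α • u)) :
    ⟪v, u' - u⟫ ≥ α / 2 * ‖u' - u‖ ^ 2 := by
  set t := ‖v + α • u‖ with htdef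
  have ht : 0 < t := norm_pos_iff.mpr hne
  have hu'n : ‖u'‖ = 1 := by
    rw [hu', norm_smul, ← htdef, norm_inv, norm_norm, inv_mul_cancel₀ ht.ne']
  have hvexp : v = t • u' - α • u := by
    rw [hu', smul_smul, mul_inv_cancel₀ ht.ne', one_smul]
    abel
  have key : ‖u' - u‖ ^ 2 = 2 - 2 * ⟪u', u⟫ := by
    rw [norm_sub_sq_real, hu'n, hu]; ring
  have hc : ⟪u', u⟫ ≤ 1 := by
    nlinarith [sq_nonneg ‖u' - u‖]
  have hiu' : ⟪u', u'⟫ = 1 := by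
    rw [real_inner_self_eq_norm_sq, hu'n]; norm_num
  have hiu : ⟪u, u⟫ = 1 := by
    rw [real_inner_self_eq_norm_sq, hu]; norm_num
  have : ⟪v, u' - u⟫ = t * (1 - ⟪u', u⟫) + α * (1 - ⟪u', u⟫) := by
    rw [hvexp, inner_sub_left, inner_sub_right, inner_sub_right,
      real_inner_smul_left, real_inner_smul_left, real_inner_smul_left,
      real_inner_smul_left, hiu', hiu, real_inner_comm u u']
    ring
  rw [this, key]
  nlinarith
end

section
/- Let δ > 0 and define w(t) = δ²/(δ² + t²). For tensors T, T', A of the same size with entrywise weights W_{i} = w(T_i − A_i) and W'_i = w(T'_i − A_i), the Frobenius norm bound ‖(W − W') ⊙ (T − A)‖_F ≤ ‖T − T'‖_F holds, where ⊙ is the Hadamard product. -/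
lemma weight_key (δ t1 t2 : ℝ) (hδ : 0 < δ) :
    ((δ ^ 2 / (δ ^ 2 + t1 ^ 2) - δ ^ 2 / (δ ^ 2 + t2 ^ 2)) * t1) ^ 2
      ≤ (t1 - t2) ^ 2 := by
  have h1 : 0 < δ ^ 2 + t1 ^ 2 := by positivity
  have h2 : 0 < δ ^ 2 + t2 ^ 2 := by positivity
  rw [div_sub_div _ _ (ne_of_gt h1) (ne_of_gt h2), div_mul_eq_mul_div, div_pow,
    div_le_iff₀ (by positivity)]
  have hub : δ ^ 2 * (t1 + t2) * t1 ≤ (δ ^ 2 + t1 ^ 2) * (δ ^ 2 + t2 ^ 2) := by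
    nlinarith [sq_nonneg (δ ^ 2 - t1 * t2), sq_nonneg (δ * t2)]
  have hlb : -((δ ^ 2 + t1 ^ 2) * (δ ^ 2 + t2 ^ 2)) ≤ δ ^ 2 * (t1 + t2) * t1 := by
    nlinarith [sq_nonneg (δ ^ 2 + t1 * t2), sq_nonneg (δ * t2)]
  have key2 : (δ ^ 2 * (t1 + t2) * t1) ^ 2 ≤ ((δ ^ 2 + t1 ^ 2) * (δ ^ 2 + t2 ^ 2)) ^ 2 :=
    sq_le_sq' hlb hub
  nlinarith [mul_le_mul_of_nonneg_left key2 (sq_nonneg (t1 - t2))]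

/-- Frobenius norm bound for the change of half-quadratic weights: with
`w(t) = δ²/(δ² + t²)`, entrywise weights `W_i = w(T_i − A_i)` and
`W'_i = w(T'_i − A_i)`, one has `‖(W − W') ⊙ (T − A)‖_F ≤ ‖T − T'‖_F`. -/
theorem weight_change_frobenius_bound {ι : Type*} [Fintype ι]
    (δ : ℝ) (hδ : 0 < δ) (T T' A W W' : ι → ℝ)
    (hW : ∀ i, W i = δ ^ 2 / (δ ^ 2 + (T i - A i) ^ 2))
    (hW' : ∀ i, W' i = δ ^ 2 / (δ ^ 2 + (T' i - A i) ^ 2)) :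
    Real.sqrt (∑ i, ((W i - W' i) * (T i - A i)) ^ 2)
      ≤ Real.sqrt (∑ i, (T i - T' i) ^ 2) := by
  apply Real.sqrt_le_sqrt
  apply Finset.sum_le_sum
  intro i _
  rw [hW i, hW' i]
  have := weight_key δ (T i - A i) (T' i - A i) hδ
  have h : T i - A i - (T' i - A i) = T i - T' i := by ring
  rwa [h] at this
end
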